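/- arXiv:2109.11259 — 5 statements merged into one kernel-verified Lean document; each statement's English description precedes it below -/
import Mathlib

section
/- Let P(x,c,m) := p_B(1−r)·γ_B(c)·β_B(m|c)·s_B(x|c,m) + p_S·r·γ(c)·Σ_{m'∈M_c} π_c(m|m')·β(m'|c)·∫_{ℝ^n} φ(x|x',m)·s(x'|c,m') dx' denote the unnormalized predicted joint density of the Bernoulli filter, let r' := p_B(1−r) + p_S·r, γ'(c) := [p_B(1−r)·γ_B(c) + p_S·r·γ(c)]/r', and β'(m|c) := [p_B(1−r)·γ_B(c)·β_B(m|c) + p_S·r·γ(c)·Σ_{m'∈M_c} π_c(m|m')·β(m'|c)] / (r'·γ'(c)). Fix c∈C and m∈M_c such that r' > 0, γ'(c) > 0 and β'(m|c) > 0, and define the predicted state PDF s'(x|c,m) := P(x,c,m) / (r'·γ'(c)·β'(m|c)). Then s'(·|c,m) is a state PDF, i.e., s'(x|c,m) ≥ 0 for all x and ∫_{ℝ^n} s'(x|c,m) dx = 1. -/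
/-!
Integrating `P(·, c, m)` termwise: the birth term contributes `p_B (1 - r) γ_B(c) β_B(m|c)`
because `s_B(·|c,m)` is a density, and by Fubini each predicted term
`∫∫ φ(x|x',m) s(x'|c,m') dx' dx` equals `∫ s(x'|c,m') dx' = 1` because every `φ(·|x',m)` is a
density. Hence `∫ P(·, c, m)` is exactly the numerator of `β'`, i.e. `r' γ' β'`, and dividing the
nonnegative `P` by it gives a density.
-/

open MeasureTheory

section MarkovDensity

variable {α β : Type*} [MeasurableSpace α] [MeasurableSpace β] {μ : Measure α} {ν : Measure β}
  [SFinite μ] [SFinite ν] {φ : α → β → ℝ} {s : β → ℝ}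

theorem integrable_prod_density_mul
    (hφm : AEStronglyMeasurable (fun p : α × β => φ p.1 p.2) (μ.prod ν)) (hφ0 : ∀ x y, 0 ≤ φ x y)
    (hφ1 : ∀ y, ∫ x, φ x y ∂μ = 1) (hs : Integrable s ν) :
    Integrable (fun p : α × β => φ p.1 p.2 * s p.2) (μ.prod ν) := by
  refine (integrable_prod_iff' (f := fun p : α × β => φ p.1 p.2 * s p.2)
    (hφm.mul hs.aestronglyMeasurable.comp_snd)).2 ⟨?_, ?_⟩
  · exact .of_forall fun y => (integrable_of_integral_eq_one (hφ1 y)).mul_const (s y)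
  · have hnorm : ∀ y, ∫ x, ‖φ x y * s y‖ ∂μ = ‖s y‖ := fun y => by
      simp only [norm_mul, Real.norm_of_nonneg (hφ0 _ y), integral_mul_const, hφ1, one_mul]
    simpa only [hnorm] using hs.norm

theorem integral_integral_density_mul
    (hφm : AEStronglyMeasurable (fun p : α × β => φ p.1 p.2) (μ.prod ν)) (hφ0 : ∀ x y, 0 ≤ φ x y)
    (hφ1 : ∀ y, ∫ x, φ x y ∂μ = 1) (hs : Integrable s ν) :
    ∫ x, ∫ y, φ x y * s y ∂ν ∂μ = ∫ y, s y ∂ν := by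
  rw [integral_integral_swap (integrable_prod_density_mul hφm hφ0 hφ1 hs)]
  simp only [integral_mul_const, hφ1, one_mul]

end MarkovDensity

section Mixture

variable {α ι : Type*} [MeasurableSpace α] {μ : Measure α} {g : ι → α → ℝ}

theorem integrable_finsetSum_mul_of_integral_eq_one (t : Finset ι) (w : ι → ℝ)
    (hg : ∀ i, ∫ x, g i x ∂μ = 1) : Integrable (fun x => ∑ i ∈ t, w i * g i x) μ :=
  integrable_finsetSum _ fun i _ => (integrable_of_integral_eq_one (hg i)).const_mul (w i)

theorem integral_finsetSum_mul_of_integral_eq_one (t : Finset ι) (w : ι → ℝ)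
    (hg : ∀ i, ∫ x, g i x ∂μ = 1) : ∫ x, ∑ i ∈ t, w i * g i x ∂μ = ∑ i ∈ t, w i := by
  rw [integral_finsetSum _ fun i _ => (integrable_of_integral_eq_one (hg i)).const_mul (w i)]
  simp only [integral_const_mul, hg, mul_one]

end Mixture

theorem jdtc_predicted_state_pdf_general
    {C : Type*} [Fintype C]
    {M : C → Type*} [∀ c, Fintype (M c)]
    {n : ℕ}
    (pB pS r : ℝ)
    (hpB : pB ∈ Set.Icc (0 : ℝ) 1) (hpS : pS ∈ Set.Icc (0 : ℝ) 1)
    (hr : r ∈ Set.Icc (0 : ℝ) 1)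
    -- birth class PMF
    (γB : C → ℝ) (hγB0 : ∀ c, 0 ≤ γB c)
    -- birth mode PMFs
    (βB : (c : C) → M c → ℝ) (hβB0 : ∀ c m, 0 ≤ βB c m)
    -- birth state PDFs
    (sB : (c : C) → M c → (Fin n → ℝ) → ℝ)
    (hsB0 : ∀ c m x, 0 ≤ sB c m x)
    (hsB1 : ∀ c m, ∫ x, sB c m x = 1)
    -- prior class PMF
    (γ : C → ℝ) (hγ0 : ∀ c, 0 ≤ γ c)
    -- prior mode PMFs
    (β : (c : C) → M c → ℝ) (hβ0 : ∀ c m, 0 ≤ β c m)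
    -- prior state PDFs
    (s : (c : C) → M c → (Fin n → ℝ) → ℝ)
    (hs0 : ∀ c m x, 0 ≤ s c m x)
    (hs1 : ∀ c m, ∫ x, s c m x = 1)
    -- mode transition probabilities π_c(m|m')
    (πc : (c : C) → M c → M c → ℝ) (hπ0 : ∀ c m m', 0 ≤ πc c m m')
    -- state transition kernel φ(x|x',m)
    (φ : (c : C) → M c → (Fin n → ℝ) → (Fin n → ℝ) → ℝ)
    (hφmeas : ∀ c m, Measurable (fun p : (Fin n → ℝ) × (Fin n → ℝ) => φ c m p.1 p.2))
    (hφ0 : ∀ c m x x', 0 ≤ φ c m x x')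
    (hφ1 : ∀ c m x', ∫ x, φ c m x x' = 1)
    -- unnormalized predicted joint density
    (P : (Fin n → ℝ) → (c : C) → M c → ℝ)
    (hP : ∀ x c m, P x c m =
      pB * (1 - r) * (γB c * (βB c m * sB c m x))
      + pS * r * γ c *
        ∑ m' : M c, πc c m m' * β c m' * ∫ x', φ c m x x' * s c m' x')
    -- fixed class and mode
    (c : C) (m : M c)
    -- predicted existence probability, class probability and mode probability
    (r' γ' β' : ℝ)
    (hr' : 0 < r')
    (hγ' : 0 < γ')
    (hβ'def : β' = (pB * (1 - r) * γB c * βB c m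
        + pS * r * γ c * ∑ m' : M c, πc c m m' * β c m') / (r' * γ'))
    (hβ' : 0 < β')
    -- predicted state PDF
    (s' : (Fin n → ℝ) → ℝ)
    (hs'def : ∀ x, s' x = P x c m / (r' * γ' * β')) :
    (∀ x, 0 ≤ s' x) ∧ ∫ x, s' x = 1 := by
  have hN : 0 < r' * γ' * β' := mul_pos (mul_pos hr' hγ') hβ'
  have hpred_one : ∀ m', ∫ x, ∫ x', φ c m x x' * s c m' x' = 1 := fun m' => by
    rw [integral_integral_density_mul (hφmeas c m).aestronglyMeasurable (hφ0 c m) (hφ1 c m)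
      (integrable_of_integral_eq_one (hs1 c m')), hs1]
  have hPsplit : ∀ x, P x c m = pB * (1 - r) * γB c * βB c m * sB c m x
      + pS * r * γ c * ∑ m', πc c m m' * β c m' * ∫ x', φ c m x x' * s c m' x' := fun x => by
    rw [hP]; ring
  have hP0 : ∀ x, 0 ≤ P x c m := fun x => by
    have hpBr : 0 ≤ pB * (1 - r) := mul_nonneg hpB.1 (sub_nonneg.2 hr.2)
    have hpSr : 0 ≤ pS * r := mul_nonneg hpS.1 hr.1
    have hpred_nonneg : ∀ m', 0 ≤ ∫ x', φ c m x x' * s c m' x' := fun m' =>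
      integral_nonneg fun x' => mul_nonneg (hφ0 c m x x') (hs0 c m' x')
    rw [hPsplit]
    exact add_nonneg
      (mul_nonneg (mul_nonneg (mul_nonneg hpBr (hγB0 c)) (hβB0 c m)) (hsB0 c m x))
      (mul_nonneg (mul_nonneg hpSr (hγ0 c)) (Finset.sum_nonneg fun m' _ =>
        mul_nonneg (mul_nonneg (hπ0 c m m') (hβ0 c m')) (hpred_nonneg m')))
  have hPint : ∫ x, P x c m = r' * γ' * β' := by
    simp_rw [hPsplit]
    rw [integral_add ((integrable_of_integral_eq_one (hsB1 c m)).const_mul _)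
        ((integrable_finsetSum_mul_of_integral_eq_one _ _ hpred_one).const_mul _),
      integral_const_mul, integral_const_mul, hsB1,
      integral_finsetSum_mul_of_integral_eq_one _ _ hpred_one, hβ'def]
    field_simp
  refine ⟨fun x => ?_, ?_⟩
  · rw [hs'def]
    exact div_nonneg (hP0 x) hN.le
  · simp_rw [hs'def, integral_div, hPint, div_self hN.ne']

/-- The predicted class&mode-conditioned state PDF of the JDTC Bernoulli
filter is a genuine state PDF: nonnegative and integrating to one. -/
theorem jdtc_predicted_state_pdf
    {C : Type*} [Fintype C] [Nonempty C]
    {M : C → Type*} [∀ c, Fintype (M c)] [∀ c, Nonempty (M c)]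
    {n : ℕ}
    (pB pS r : ℝ)
    (hpB : pB ∈ Set.Icc (0 : ℝ) 1) (hpS : pS ∈ Set.Icc (0 : ℝ) 1)
    (hr : r ∈ Set.Icc (0 : ℝ) 1)
    -- birth class PMF
    (γB : C → ℝ) (hγB0 : ∀ c, 0 ≤ γB c) (hγB1 : ∑ c, γB c = 1)
    -- birth mode PMFs
    (βB : (c : C) → M c → ℝ) (hβB0 : ∀ c m, 0 ≤ βB c m)
    (hβB1 : ∀ c, ∑ m, βB c m = 1)
    -- birth state PDFs
    (sB : (c : C) → M c → (Fin n → ℝ) → ℝ)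
    (hsBmeas : ∀ c m, Measurable (sB c m)) (hsB0 : ∀ c m x, 0 ≤ sB c m x)
    (hsB1 : ∀ c m, ∫ x, sB c m x = 1)
    -- prior class PMF
    (γ : C → ℝ) (hγ0 : ∀ c, 0 ≤ γ c) (hγ1 : ∑ c, γ c = 1)
    -- prior mode PMFs
    (β : (c : C) → M c → ℝ) (hβ0 : ∀ c m, 0 ≤ β c m)
    (hβ1 : ∀ c, ∑ m, β c m = 1)
    -- prior state PDFs
    (s : (c : C) → M c → (Fin n → ℝ) → ℝ)
    (hsmeas : ∀ c m, Measurable (s c m)) (hs0 : ∀ c m x, 0 ≤ s c m x)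
    (hs1 : ∀ c m, ∫ x, s c m x = 1)
    -- mode transition probabilities π_c(m|m')
    (πc : (c : C) → M c → M c → ℝ) (hπ0 : ∀ c m m', 0 ≤ πc c m m')
    (hπ1 : ∀ c m', ∑ m, πc c m m' = 1)
    -- state transition kernel φ(x|x',m)
    (φ : (c : C) → M c → (Fin n → ℝ) → (Fin n → ℝ) → ℝ)
    (hφmeas : ∀ c m, Measurable (fun p : (Fin n → ℝ) × (Fin n → ℝ) => φ c m p.1 p.2))
    (hφ0 : ∀ c m x x', 0 ≤ φ c m x x')
    (hφ1 : ∀ c m x', ∫ x, φ c m x x' = 1)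
    -- unnormalized predicted joint density
    (P : (Fin n → ℝ) → (c : C) → M c → ℝ)
    (hP : ∀ x c m, P x c m =
      pB * (1 - r) * (γB c * (βB c m * sB c m x))
      + pS * r * γ c *
        ∑ m' : M c, πc c m m' * β c m' * ∫ x', φ c m x x' * s c m' x')
    -- fixed class and mode
    (c : C) (m : M c)
    -- predicted existence probability, class probability and mode probability
    (r' γ' β' : ℝ)
    (hr'def : r' = pB * (1 - r) + pS * r) (hr' : 0 < r')
    (hγ'def : γ' = (pB * (1 - r) * γB c + pS * r * γ c) / r') (hγ' : 0 < γ')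
    (hβ'def : β' = (pB * (1 - r) * γB c * βB c m
        + pS * r * γ c * ∑ m' : M c, πc c m m' * β c m') / (r' * γ'))
    (hβ' : 0 < β')
    -- predicted state PDF
    (s' : (Fin n → ℝ) → ℝ)
    (hs'def : ∀ x, s' x = P x c m / (r' * γ' * β')) :
    (∀ x, 0 ≤ s' x) ∧ ∫ x, s' x = 1 :=
  jdtc_predicted_state_pdf_general pB pS r hpB hpS hr γB hγB0 βB hβB0 sB hsB0 hsB1 γ hγ0 β hβ0 s hs0
    hs1 πc hπ0 φ hφmeas hφ0 hφ1 P hP c m r' γ' β' hr' hγ' hβ'def hβ' s' hs'def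
end

section
/- Let N = {1,…,N} be a finite index set with weights ω_i > 0 satisfying Σ_{i∈N} ω_i = 1. For each i∈N let γ^i be a class PMF with γ^i(c) > 0 for all c, β^i(·|c) mode PMFs with β^i(m|c) > 0 for all m, and s^i(·|c,m) state PDFs. Define the unnormalized geometric means γ̃(c) := ∏_{i∈N} γ^i(c)^{ω_i}, β̃(m|c) := ∏_{i∈N} β^i(m|c)^{ω_i}, s̃(x|c,m) := ∏_{i∈N} s^i(x|c,m)^{ω_i}, and assume 0 < ∫_{ℝ^n} s̃(x|c,m) dx < ∞ for all c∈C, m∈M_c. Define the fused components s̄(x|c,m) := s̃(x|c,m)/∫ s̃(x'|c,m) dx', β̄(m|c) := β̃(m|c)·∫ s̃(x|c,m) dx / Σ_{m'∈M_c} β̃(m'|c)·∫ s̃(x|c,m') dx, and γ̄(c) := γ̃(c)·Σ_{m∈M_c} β̃(m|c)·∫ s̃(x|c,m) dx / Σ_{c'∈C} γ̃(c')·Σ_{m∈M_{c'}} β̃(m|c')·∫ s̃(x|c',m) dx. Then for every x∈ℝ^n, c∈C, m∈M_c, the normalized weighted geometric mean of the joint densities factorizes: ∏_{i∈N} [γ^i(c)·β^i(m|c)·s^i(x|c,m)]^{ω_i}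 / ( Σ_{c'∈C} Σ_{m'∈M_{c'}} ∫_{ℝ^n} ∏_{i∈N} [γ^i(c')·β^i(m'|c')·s^i(x'|c',m')]^{ω_i} dx' ) = γ̄(c)·β̄(m|c)·s̄(x|c,m). -/
/-!
The weighted geometric mean is multiplicative in nonnegative arguments, so the fused joint
density is `γ̃(c) β̃(m|c) s̃(x|c,m)`. Normalizing a density of this hierarchical form only needs
the telescoping identity `a b y / Z = (a S / Z) (b I / S) (y / I)`, where `I` is the integral
of `s̃(·|c,m)`, `S` the `β̃`-weighted sum of these over the modes and `Z` the `γ̃`-weighted sum of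
the `S` over the classes.
-/

open MeasureTheory

theorem Real.finset_prod_mul_rpow {ι : Type*} (s : Finset ι) {f g : ι → ℝ}
    (hf : ∀ i ∈ s, 0 ≤ f i) (hg : ∀ i ∈ s, 0 ≤ g i) (w : ι → ℝ) :
    ∏ i ∈ s, (f i * g i) ^ w i = (∏ i ∈ s, f i ^ w i) * ∏ i ∈ s, g i ^ w i := by
  rw [← Finset.prod_mul_distrib]
  exact Finset.prod_congr rfl fun i hi => Real.mul_rpow (hf i hi) (hg i hi)

theorem div_sum_sum_integral_mul_mul_eq {α C : Type*} [MeasurableSpace α] {μ : Measure α}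
    [Fintype C] {M : C → Type*} [∀ c, Fintype (M c)] [∀ c, Nonempty (M c)]
    (a : C → ℝ) (b : (c : C) → M c → ℝ) (hb : ∀ c m, 0 < b c m)
    (f : (c : C) → M c → α → ℝ) (hf : ∀ c m, 0 < ∫ x, f c m x ∂μ) (x : α) (c : C) (m : M c) :
    a c * b c m * f c m x / ∑ c', ∑ m', ∫ x', a c' * b c' m' * f c' m' x' ∂μ =
      a c * (∑ m', b c m' * ∫ x', f c m' x' ∂μ) /
          (∑ c', a c' * ∑ m', b c' m' * ∫ x', f c' m' x' ∂μ) *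
        (b c m * (∫ x', f c m x' ∂μ) / ∑ m', b c m' * ∫ x', f c m' x' ∂μ) *
        (f c m x / ∫ x', f c m x' ∂μ) := by
  have hS : 0 < ∑ m', b c m' * ∫ x', f c m' x' ∂μ :=
    Finset.sum_pos (fun m' _ => mul_pos (hb c m') (hf c m')) Finset.univ_nonempty
  have hZ : ∑ c', ∑ m', ∫ x', a c' * b c' m' * f c' m' x' ∂μ =
      ∑ c', a c' * ∑ m', b c' m' * ∫ x', f c' m' x' ∂μ := by
    simp only [integral_const_mul, Finset.mul_sum, mul_assoc]
  rw [hZ]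
  field_simp [hS.ne', (hf c m).ne']

theorem gci_fusion_factorization_general
    {C : Type*} [Fintype C]
    {M : C → Type*} [∀ c, Fintype (M c)] [∀ c, Nonempty (M c)]
    {ι : Type*} [Fintype ι]
    {n : ℕ}
    -- fusion weights
    (ω : ι → ℝ)
    -- local class PMFs
    (γ : ι → C → ℝ) (hγ0 : ∀ i c, 0 < γ i c)
    -- local mode PMFs
    (β : ι → (c : C) → M c → ℝ) (hβ0 : ∀ i c m, 0 < β i c m)
    -- local state PDFs
    (s : ι → (c : C) → M c → (Fin n → ℝ) → ℝ)
    (hs0 : ∀ i c m x, 0 ≤ s i c m x)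
    -- unnormalized geometric means
    (γt : C → ℝ) (hγt : ∀ c, γt c = ∏ i, (γ i c) ^ (ω i))
    (βt : (c : C) → M c → ℝ) (hβt : ∀ c m, βt c m = ∏ i, (β i c m) ^ (ω i))
    (st : (c : C) → M c → (Fin n → ℝ) → ℝ)
    (hst : ∀ c m x, st c m x = ∏ i, (s i c m x) ^ (ω i))
    (hstpos : ∀ (c : C) (m : M c), 0 < ∫ x, st c m x)
    -- fused state PDFs
    (sbar : (c : C) → M c → (Fin n → ℝ) → ℝ)
    (hsbar : ∀ c m x, sbar c m x = st c m x / ∫ x', st c m x')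
    -- fused mode PMFs
    (βbar : (c : C) → M c → ℝ)
    (hβbar : ∀ c m, βbar c m =
      βt c m * (∫ x, st c m x) / ∑ m', βt c m' * ∫ x, st c m' x)
    -- fused class PMF
    (γbar : C → ℝ)
    (hγbar : ∀ c, γbar c =
      γt c * (∑ m, βt c m * ∫ x, st c m x) /
        ∑ c', γt c' * ∑ m, βt c' m * ∫ x, st c' m x) :
    ∀ (x : Fin n → ℝ) (c : C) (m : M c),
      (∏ i, (γ i c * β i c m * s i c m x) ^ (ω i)) /
        (∑ c', ∑ m', ∫ x', ∏ i, (γ i c' * β i c' m' * s i c' m' x') ^ (ω i)) =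
      γbar c * βbar c m * sbar c m x := by
  intro x c m
  have hjoint : ∀ c m x, ∏ i, (γ i c * β i c m * s i c m x) ^ (ω i) =
      γt c * βt c m * st c m x := fun c m x => by
    rw [Real.finset_prod_mul_rpow _ (fun i _ => (mul_pos (hγ0 i c) (hβ0 i c m)).le)
        (fun i _ => hs0 i c m x),
      Real.finset_prod_mul_rpow _ (fun i _ => (hγ0 i c).le) (fun i _ => (hβ0 i c m).le),
      hγt, hβt, hst]
  simp only [hjoint]
  rw [hγbar, hβbar, hsbar]
  exact div_sum_sum_integral_mul_mul_eq γt βt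
    (fun c m => hβt c m ▸ Finset.prod_pos fun i _ => Real.rpow_pos_of_pos (hβ0 i c m) _)
    st hstpos x c m

/-- The normalized weighted geometric mean (GCI fusion) of the joint
class-mode-state densities factorizes into fused class PMF, fused mode PMFs and fused
state PDFs. -/
theorem gci_fusion_factorization
    {C : Type*} [Fintype C] [Nonempty C]
    {M : C → Type*} [∀ c, Fintype (M c)] [∀ c, Nonempty (M c)]
    {ι : Type*} [Fintype ι] [Nonempty ι]
    {n : ℕ}
    -- fusion weights
    (ω : ι → ℝ) (hω0 : ∀ i, 0 < ω i) (hω1 : ∑ i, ω i = 1)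
    -- local class PMFs
    (γ : ι → C → ℝ) (hγ0 : ∀ i c, 0 < γ i c) (hγ1 : ∀ i, ∑ c, γ i c = 1)
    -- local mode PMFs
    (β : ι → (c : C) → M c → ℝ) (hβ0 : ∀ i c m, 0 < β i c m)
    (hβ1 : ∀ i c, ∑ m, β i c m = 1)
    -- local state PDFs
    (s : ι → (c : C) → M c → (Fin n → ℝ) → ℝ)
    (hsmeas : ∀ i c m, Measurable (s i c m)) (hs0 : ∀ i c m x, 0 ≤ s i c m x)
    (hs1 : ∀ i c m, ∫ x, s i c m x = 1)
    -- unnormalized geometric means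
    (γt : C → ℝ) (hγt : ∀ c, γt c = ∏ i, (γ i c) ^ (ω i))
    (βt : (c : C) → M c → ℝ) (hβt : ∀ c m, βt c m = ∏ i, (β i c m) ^ (ω i))
    (st : (c : C) → M c → (Fin n → ℝ) → ℝ)
    (hst : ∀ c m x, st c m x = ∏ i, (s i c m x) ^ (ω i))
    (hstint : ∀ c m, Integrable (st c m))
    (hstpos : ∀ (c : C) (m : M c), 0 < ∫ x, st c m x)
    -- fused state PDFs
    (sbar : (c : C) → M c → (Fin n → ℝ) → ℝ)
    (hsbar : ∀ c m x, sbar c m x = st c m x / ∫ x', st c m x')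
    -- fused mode PMFs
    (βbar : (c : C) → M c → ℝ)
    (hβbar : ∀ c m, βbar c m =
      βt c m * (∫ x, st c m x) / ∑ m', βt c m' * ∫ x, st c m' x)
    -- fused class PMF
    (γbar : C → ℝ)
    (hγbar : ∀ c, γbar c =
      γt c * (∑ m, βt c m * ∫ x, st c m x) /
        ∑ c', γt c' * ∑ m, βt c' m * ∫ x, st c' m x) :
    ∀ (x : Fin n → ℝ) (c : C) (m : M c),
      (∏ i, (γ i c * β i c m * s i c m x) ^ (ω i)) /
        (∑ c', ∑ m', ∫ x', ∏ i, (γ i c' * β i c' m' * s i c' m' x') ^ (ω i)) =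
      γbar c * βbar c m * sbar c m x :=
  gci_fusion_factorization_general ω γ hγ0 β hβ0 s hs0 γt hγt βt hβt st hst hstpos sbar hsbar βbar
    hβbar γbar hγbar
end

section
/- Let N = {1,…,N} be a finite index set with weights ω_i > 0 satisfying Σ_{i∈N} ω_i = 1. For each i∈N let r^i ∈ (0,1) be an existence probability, γ^i a class PMF with γ^i(c) > 0 for all c, β^i(·|c) mode PMFs with β^i(m|c) > 0 for all m, and s^i(·|c,m) state PDFs. Define γ̃(c) := ∏_i γ^i(c)^{ω_i}, β̃(m|c) := ∏_i β^i(m|c)^{ω_i}, s̃(x|c,m) := ∏_i s^i(x|c,m)^{ω_i}, assume 0 < ∫ s̃(x|c,m) dx < ∞ for all c, m, and set ζ̃ := ∏_i (1−r^i)^{ω_i}, r̃ := ∏_i (r^i)^{ω_i}, S := Σ_{c∈C} γ̃(c) Σ_{m∈M_c} β̃(m|c) ∫ s̃(x|c,m) dx, C₀ := ζ̃ + r̃·S, and r̄ := r̃·S / (ζ̃ + r̃·S). Then the GCI-fused Bernoulli density is again a Bernoulli density with parameter r̄: (i) ζ̃ / C₀ = 1 − r̄, and (ii) for every x∈ℝ^n,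 c∈C, m∈M_c, r̃·∏_{i∈N} [γ^i(c)·β^i(m|c)·s^i(x|c,m)]^{ω_i} / C₀ = r̄·γ̄(c)·β̄(m|c)·s̄(x|c,m), where γ̄, β̄, s̄ are the fused class PMF, mode PMFs and state PDFs defined by γ̄(c) := γ̃(c)·Σ_{m} β̃(m|c)·∫ s̃(·|c,m) / Σ_{c'} γ̃(c')·Σ_{m} β̃(m|c')·∫ s̃(·|c',m), β̄(m|c) := β̃(m|c)·∫ s̃(·|c,m) / Σ_{m'} β̃(m'|c)·∫ s̃(·|c,m'), s̄(x|c,m) := s̃(x|c,m)/∫ s̃(x'|c,m) dx'. -/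
/-!
A weighted geometric mean of products is the product of the weighted geometric means, so the
fused singleton density is `r̃ γ̃(c) β̃(m|c) s̃(x|c,m) / C₀`. Normalizing the class-mode-state
hierarchy level by level telescopes: with `I = ∫ s̃(·|c,m)` and `A = Σ_m β̃(m|c) I`,
`γ̃ β̃ s̃ = S · (γ̃ A / S) · (β̃ I / A) · (s̃ / I)`.
-/

open MeasureTheory Finset

theorem Real.prod_mul_rpow {ι : Type*} (s : Finset ι) {a b : ι → ℝ} (w : ι → ℝ)
    (ha : ∀ i ∈ s, 0 ≤ a i) (hb : ∀ i ∈ s, 0 ≤ b i) :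
    ∏ i ∈ s, (a i * b i) ^ w i = (∏ i ∈ s, a i ^ w i) * ∏ i ∈ s, b i ^ w i := by
  rw [← prod_mul_distrib]
  exact prod_congr rfl fun i hi => Real.mul_rpow (ha i hi) (hb i hi)

theorem Real.prod_rpow_pos {ι : Type*} (s : Finset ι) {a : ι → ℝ} (w : ι → ℝ)
    (ha : ∀ i ∈ s, 0 < a i) : 0 < ∏ i ∈ s, a i ^ w i :=
  prod_pos fun i hi => Real.rpow_pos_of_pos (ha i hi) _

theorem mul_div_eq_mul_normalized_chain (r g b f C : ℝ) {S A I : ℝ}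
    (hS : S ≠ 0) (hA : A ≠ 0) (hI : I ≠ 0) :
    r * (g * b * f) / C = r * S / C * (g * A / S) * (b * I / A) * (f / I) := by
  field_simp

theorem gci_fusion_bernoulli_general
    {C : Type*} [Fintype C]
    {M : C → Type*} [∀ c, Fintype (M c)]
    {ι : Type*} [Fintype ι]
    {n : ℕ}
    -- fusion weights
    (ω : ι → ℝ)
    -- local existence probabilities
    (r : ι → ℝ) (hr : ∀ i, r i ∈ Set.Ioo (0 : ℝ) 1)
    -- local class PMFs
    (γ : ι → C → ℝ) (hγ0 : ∀ i c, 0 < γ i c)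
    -- local mode PMFs
    (β : ι → (c : C) → M c → ℝ) (hβ0 : ∀ i c m, 0 < β i c m)
    -- local state PDFs
    (s : ι → (c : C) → M c → (Fin n → ℝ) → ℝ)
    (hs0 : ∀ i c m x, 0 ≤ s i c m x)
    -- unnormalized geometric means
    (γt : C → ℝ) (hγt : ∀ c, γt c = ∏ i, (γ i c) ^ (ω i))
    (βt : (c : C) → M c → ℝ) (hβt : ∀ c m, βt c m = ∏ i, (β i c m) ^ (ω i))
    (st : (c : C) → M c → (Fin n → ℝ) → ℝ)
    (hst : ∀ c m x, st c m x = ∏ i, (s i c m x) ^ (ω i))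
    (hstpos : ∀ (c : C) (m : M c), 0 < ∫ x, st c m x)
    (ζt : ℝ) (hζt : ζt = ∏ i, (1 - r i) ^ (ω i))
    (rt : ℝ) (hrt : rt = ∏ i, (r i) ^ (ω i))
    (S : ℝ) (hS : S = ∑ c, γt c * ∑ m, βt c m * ∫ x, st c m x)
    (C₀ : ℝ) (hC₀ : C₀ = ζt + rt * S)
    -- fused existence probability
    (rbar : ℝ) (hrbar : rbar = rt * S / (ζt + rt * S))
    -- fused state PDFs
    (sbar : (c : C) → M c → (Fin n → ℝ) → ℝ)
    (hsbar : ∀ c m x, sbar c m x = st c m x / ∫ x', st c m x')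
    -- fused mode PMFs
    (βbar : (c : C) → M c → ℝ)
    (hβbar : ∀ c m, βbar c m =
      βt c m * (∫ x, st c m x) / ∑ m', βt c m' * ∫ x, st c m' x)
    -- fused class PMF
    (γbar : C → ℝ)
    (hγbar : ∀ c, γbar c =
      γt c * (∑ m, βt c m * ∫ x, st c m x) /
        ∑ c', γt c' * ∑ m, βt c' m * ∫ x, st c' m x) :
    ζt / C₀ = 1 - rbar ∧
      ∀ (x : Fin n → ℝ) (c : C) (m : M c),
        rt * (∏ i, (γ i c * β i c m * s i c m x) ^ (ω i)) / C₀ =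
          rbar * γbar c * βbar c m * sbar c m x := by
  have hγt_pos (c : C) : 0 < γt c := hγt c ▸ Real.prod_rpow_pos _ _ fun i _ => hγ0 i c
  have hβt_pos (c : C) (m : M c) : 0 < βt c m :=
    hβt c m ▸ Real.prod_rpow_pos _ _ fun i _ => hβ0 i c m
  have hrt_pos : 0 < rt := hrt ▸ Real.prod_rpow_pos _ _ fun i _ => (hr i).1
  have hζt_pos : 0 < ζt := hζt ▸ Real.prod_rpow_pos _ _ fun i _ => sub_pos.2 (hr i).2
  have hA_pos (c : C) (m : M c) : 0 < ∑ m', βt c m' * ∫ x, st c m' x :=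
    sum_pos (fun m' _ => mul_pos (hβt_pos c m') (hstpos c m')) ⟨m, mem_univ m⟩
  have hmass_nonneg (c : C) : 0 ≤ γt c * ∑ m, βt c m * ∫ x, st c m x :=
    mul_nonneg (hγt_pos c).le (sum_nonneg fun m _ => (mul_pos (hβt_pos c m) (hstpos c m)).le)
  have hS_pos (c : C) (m : M c) : 0 < S :=
    hS ▸ sum_pos' (fun c' _ => hmass_nonneg c') ⟨c, mem_univ c, mul_pos (hγt_pos c) (hA_pos c m)⟩
  refine ⟨?_, fun x c m => ?_⟩
  · have hS_nonneg : 0 ≤ S := hS ▸ sum_nonneg fun c _ => hmass_nonneg c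
    rw [hrbar, hC₀, one_sub_div (by positivity), add_sub_cancel_right]
  · rw [Real.prod_mul_rpow _ _ (fun i _ => mul_nonneg (hγ0 i c).le (hβ0 i c m).le)
        fun i _ => hs0 i c m x,
      Real.prod_mul_rpow _ _ (fun i _ => (hγ0 i c).le) fun i _ => (hβ0 i c m).le,
      ← hγt, ← hβt, ← hst, hrbar, ← hC₀, hγbar, hβbar, hsbar, ← hS]
    exact mul_div_eq_mul_normalized_chain _ _ _ _ _ (hS_pos c m).ne' (hA_pos c m).ne'
      (hstpos c m).ne'

/-- GCI fusion of Bernoulli densities over the augmented class-mode-state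
space yields again a Bernoulli density, with fused existence probability
`r̄ = r̃ S / (ζ̃ + r̃ S)` and fused class PMF, mode PMFs and state PDFs. -/
theorem gci_fusion_bernoulli
    {C : Type*} [Fintype C] [Nonempty C]
    {M : C → Type*} [∀ c, Fintype (M c)] [∀ c, Nonempty (M c)]
    {ι : Type*} [Fintype ι] [Nonempty ι]
    {n : ℕ}
    -- fusion weights
    (ω : ι → ℝ) (hω0 : ∀ i, 0 < ω i) (hω1 : ∑ i, ω i = 1)
    -- local existence probabilities
    (r : ι → ℝ) (hr : ∀ i, r i ∈ Set.Ioo (0 : ℝ) 1)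
    -- local class PMFs
    (γ : ι → C → ℝ) (hγ0 : ∀ i c, 0 < γ i c) (hγ1 : ∀ i, ∑ c, γ i c = 1)
    -- local mode PMFs
    (β : ι → (c : C) → M c → ℝ) (hβ0 : ∀ i c m, 0 < β i c m)
    (hβ1 : ∀ i c, ∑ m, β i c m = 1)
    -- local state PDFs
    (s : ι → (c : C) → M c → (Fin n → ℝ) → ℝ)
    (hsmeas : ∀ i c m, Measurable (s i c m)) (hs0 : ∀ i c m x, 0 ≤ s i c m x)
    (hs1 : ∀ i c m, ∫ x, s i c m x = 1)
    -- unnormalized geometric means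
    (γt : C → ℝ) (hγt : ∀ c, γt c = ∏ i, (γ i c) ^ (ω i))
    (βt : (c : C) → M c → ℝ) (hβt : ∀ c m, βt c m = ∏ i, (β i c m) ^ (ω i))
    (st : (c : C) → M c → (Fin n → ℝ) → ℝ)
    (hst : ∀ c m x, st c m x = ∏ i, (s i c m x) ^ (ω i))
    (hstint : ∀ c m, Integrable (st c m))
    (hstpos : ∀ (c : C) (m : M c), 0 < ∫ x, st c m x)
    (ζt : ℝ) (hζt : ζt = ∏ i, (1 - r i) ^ (ω i))
    (rt : ℝ) (hrt : rt = ∏ i, (r i) ^ (ω i))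
    (S : ℝ) (hS : S = ∑ c, γt c * ∑ m, βt c m * ∫ x, st c m x)
    (C₀ : ℝ) (hC₀ : C₀ = ζt + rt * S)
    -- fused existence probability
    (rbar : ℝ) (hrbar : rbar = rt * S / (ζt + rt * S))
    -- fused state PDFs
    (sbar : (c : C) → M c → (Fin n → ℝ) → ℝ)
    (hsbar : ∀ c m x, sbar c m x = st c m x / ∫ x', st c m x')
    -- fused mode PMFs
    (βbar : (c : C) → M c → ℝ)
    (hβbar : ∀ c m, βbar c m =
      βt c m * (∫ x, st c m x) / ∑ m', βt c m' * ∫ x, st c m' x)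
    -- fused class PMF
    (γbar : C → ℝ)
    (hγbar : ∀ c, γbar c =
      γt c * (∑ m, βt c m * ∫ x, st c m x) /
        ∑ c', γt c' * ∑ m, βt c' m * ∫ x, st c' m x) :
    ζt / C₀ = 1 - rbar ∧
      ∀ (x : Fin n → ℝ) (c : C) (m : M c),
        rt * (∏ i, (γ i c * β i c m * s i c m x) ^ (ω i)) / C₀ =
          rbar * γbar c * βbar c m * sbar c m x :=
  gci_fusion_bernoulli_general ω r hr γ hγ0 β hβ0 s hs0 γt hγt βt hβt st hst hstpos ζt hζt rt hrt S
    hS C₀ hC₀ rbar hrbar sbar hsbar βbar hβbar γbar hγbar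
end

section
/- Let μ₁, μ₂ ∈ ℝ^n, let P₁, P₂ ∈ ℝ^{n×n} be symmetric positive definite, and let ω ∈ (0,1). Define P̄ := (ω P₁^{−1} + (1−ω) P₂^{−1})^{−1} and μ̄ := P̄ (ω P₁^{−1} μ₁ + (1−ω) P₂^{−1} μ₂). Then P̄ is symmetric positive definite and for every x ∈ ℝ^n the weighted geometric mean of the two Gaussian densities satisfies N(x; μ₁, P₁)^ω · N(x; μ₂, P₂)^{1−ω} = ε(ω, P₁) · ε(1−ω, P₂) · N(μ₁ − μ₂; 0, ω^{−1}P₁ + (1−ω)^{−1}P₂) · N(x; μ̄, P̄), where ε(ω, P) := sqrt( det(2π ω^{−1} P) · (det(2π P))^{−ω} ). -/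
open Matrix Real

/-- The `n`-dimensional Gaussian density with mean `μ` and covariance `P`. -/
noncomputable def gaussianPdf {n : ℕ} (μ : Fin n → ℝ) (P : Matrix (Fin n) (Fin n) ℝ)
    (x : Fin n → ℝ) : ℝ :=
  (2 * Real.pi) ^ (-(n : ℝ) / 2) * P.det ^ (-(1 : ℝ) / 2) *
    Real.exp (-(1 / 2) * ((x - μ) ⬝ᵥ (P⁻¹ *ᵥ (x - μ))))

/-- The constant `ε(ω, P) = sqrt( det(2π ω⁻¹ P) · det(2π P)^(−ω) )`. -/
noncomputable def epsConst {n : ℕ} (ω : ℝ) (P : Matrix (Fin n) (Fin n) ℝ) : ℝ :=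
  Real.sqrt (((2 * Real.pi) • (ω⁻¹ • P)).det * ((2 * Real.pi) • P).det ^ (-ω))

/-! Raising `N(x; μ, P)` to the power `ω` gives `ε(ω, P)` times the density with covariance
`ω⁻¹ P`, so the weighted geometric mean is a constant times a product of two Gaussian densities.
That product is computed by completing the square: for symmetric `A`, `B` with `A + B` invertible,
`(x - a)ᵀ A (x - a) + (x - b)ᵀ B (x - b) = (a - b)ᵀ B (A + B)⁻¹ A (a - b) + (x - m)ᵀ (A + B) (x - m)`
with `m = (A + B)⁻¹ (A a + B b)`. For `A = P₁⁻¹`, `B = P₂⁻¹` the factorisation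
`P₁ + P₂ = P₁ (P₁⁻¹ + P₂⁻¹) P₂` identifies the middle matrix as `(P₁ + P₂)⁻¹` and splits
`det (P₁ + P₂)` as the normalisation of the product requires. -/

namespace Matrix

variable {ι R : Type*} [Fintype ι] [CommRing R]

lemma IsSymm.add_dotProduct_mulVec_add {M : Matrix ι ι R} (hM : M.IsSymm) (u v : ι → R) :
    (u + v) ⬝ᵥ M *ᵥ (u + v) = u ⬝ᵥ M *ᵥ u + 2 * (u ⬝ᵥ M *ᵥ v) + v ⬝ᵥ M *ᵥ v := by
  have hvu : v ⬝ᵥ M *ᵥ u = u ⬝ᵥ M *ᵥ v := by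
    rw [← dotProduct_transpose_mulVec, hM.eq]
  rw [mulVec_add, dotProduct_add, add_dotProduct, add_dotProduct, hvu]
  ring

lemma mulVec_dotProduct_mulVec_mulVec (M N : Matrix ι ι R) (v : ι → R) :
    (M *ᵥ v) ⬝ᵥ N *ᵥ (M *ᵥ v) = v ⬝ᵥ (Mᵀ * N * M) *ᵥ v := by
  rw [← mulVec_mulVec, ← mulVec_mulVec, dotProduct_mulVec v Mᵀ, vecMul_transpose]

variable [DecidableEq ι]

lemma mul_inv_add_mul_comm {A B : Matrix ι ι R} (h : IsUnit (A + B).det) :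
    A * (A + B)⁻¹ * B = B * (A + B)⁻¹ * A :=
  calc A * (A + B)⁻¹ * B = (A + B - B) * (A + B)⁻¹ * B := by rw [add_sub_cancel_right]
    _ = B - B * (A + B)⁻¹ * B := by rw [sub_mul, mul_nonsing_inv _ h, sub_mul, one_mul]
    _ = B * (A + B)⁻¹ * (A + B - B) := by
      rw [mul_sub, Matrix.mul_assoc B _ (A + B), nonsing_inv_mul _ h, mul_one]
    _ = B * (A + B)⁻¹ * A := by rw [add_sub_cancel_right]

lemma add_eq_mul_inv_add_inv_mul {P Q : Matrix ι ι R} (hP : IsUnit P.det) (hQ : IsUnit Q.det) :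
    P + Q = P * (P⁻¹ + Q⁻¹) * Q := by
  rw [Matrix.mul_add, Matrix.add_mul, mul_nonsing_inv _ hP, Matrix.one_mul, Matrix.mul_assoc,
    nonsing_inv_mul _ hQ, Matrix.mul_one, add_comm]

lemma inv_add_eq_inv_mul_inv_inv_add_inv_mul_inv {P Q : Matrix ι ι R} (hP : IsUnit P.det)
    (hQ : IsUnit Q.det) : (P + Q)⁻¹ = Q⁻¹ * (P⁻¹ + Q⁻¹)⁻¹ * P⁻¹ := by
  rw [add_eq_mul_inv_add_inv_mul hP hQ, mul_inv_rev, mul_inv_rev, Matrix.mul_assoc]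

theorem quadForm_add_quadForm {A B : Matrix ι ι R} (hA : A.IsSymm) (hB : B.IsSymm)
    (h : IsUnit (A + B).det) (a b x : ι → R) :
    (x - a) ⬝ᵥ A *ᵥ (x - a) + (x - b) ⬝ᵥ B *ᵥ (x - b) =
      (a - b) ⬝ᵥ (B * (A + B)⁻¹ * A) *ᵥ (a - b) +
        (x - (A + B)⁻¹ *ᵥ (A *ᵥ a + B *ᵥ b)) ⬝ᵥ (A + B) *ᵥ
          (x - (A + B)⁻¹ *ᵥ (A *ᵥ a + B *ᵥ b)) := by
  set S := A + B with hS
  set m := S⁻¹ *ᵥ (A *ᵥ a + B *ᵥ b)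
  have hK : A * S⁻¹ * B = B * S⁻¹ * A := mul_inv_add_mul_comm h
  have hSsymm : S⁻¹ᵀ = S⁻¹ := (hA.add hB).inv
  have hmS : ∀ v, S⁻¹ *ᵥ (A *ᵥ v + B *ᵥ v) = v := fun v => by
    rw [← add_mulVec, mulVec_mulVec, nonsing_inv_mul _ h, one_mulVec]
  have hxa : x - a = (x - m) + (S⁻¹ * B) *ᵥ (b - a) := by
    conv_lhs => rw [← hmS a]
    simp only [m, mulVec_add, mulVec_sub, ← mulVec_mulVec]
    abel
  have hxb : x - b = (x - m) + (S⁻¹ * A) *ᵥ (a - b) := by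
    conv_lhs => rw [← hmS b]
    simp only [m, mulVec_add, mulVec_sub, ← mulVec_mulVec]
    abel
  have hcross : (x - m) ⬝ᵥ A *ᵥ ((S⁻¹ * B) *ᵥ (b - a)) +
      (x - m) ⬝ᵥ B *ᵥ ((S⁻¹ * A) *ᵥ (a - b)) = 0 := by
    rw [mulVec_mulVec, mulVec_mulVec, ← Matrix.mul_assoc, ← Matrix.mul_assoc, hK, ← neg_sub a b,
      mulVec_neg, dotProduct_neg, neg_add_cancel]
  have hsquare : (B * S⁻¹) * A * (S⁻¹ * B) + (A * S⁻¹) * B * (S⁻¹ * A) = B * S⁻¹ * A :=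
    calc (B * S⁻¹) * A * (S⁻¹ * B) + (A * S⁻¹) * B * (S⁻¹ * A)
        = (B * S⁻¹ * A) * S⁻¹ * B + (A * S⁻¹ * B) * S⁻¹ * A := by simp only [Matrix.mul_assoc]
      _ = (B * S⁻¹ * A) * S⁻¹ * (B + A) := by rw [hK, Matrix.mul_add]
      _ = B * S⁻¹ * A := by
          rw [add_comm B A, ← hS, Matrix.mul_assoc _ S⁻¹ S, nonsing_inv_mul _ h, Matrix.mul_one]
  have hquad : (b - a) ⬝ᵥ (B * S⁻¹ * A * (S⁻¹ * B)) *ᵥ (b - a) +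
      (a - b) ⬝ᵥ (A * S⁻¹ * B * (S⁻¹ * A)) *ᵥ (a - b) = (a - b) ⬝ᵥ (B * S⁻¹ * A) *ᵥ (a - b) := by
    rw [← neg_sub a b, mulVec_neg, dotProduct_neg, neg_dotProduct, neg_neg, ← dotProduct_add,
      ← add_mulVec, hsquare]
  rw [hxa, hxb, hA.add_dotProduct_mulVec_add, hB.add_dotProduct_mulVec_add,
    mulVec_dotProduct_mulVec_mulVec, mulVec_dotProduct_mulVec_mulVec, transpose_mul,
    transpose_mul, hA.eq, hB.eq, hSsymm, hS, add_mulVec, dotProduct_add]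
  linear_combination 2 * hcross + hquad

lemma inv_inv_smul {K : Type*} [Field K] {P : Matrix ι ι K} (hP : IsUnit P.det) (c : K) :
    (c⁻¹ • P)⁻¹ = c • P⁻¹ := by
  rcases eq_or_ne c 0 with rfl | hc
  · simp
  · let := invertibleOfNonzero (inv_ne_zero hc)
    rw [inv_smul _ _ hP, invOf_eq_inv, inv_inv]

end Matrix

section Gaussian

variable {n : ℕ}

lemma log_det_smul {P : Matrix (Fin n) (Fin n) ℝ} (hP : 0 < P.det) {c : ℝ} (hc : 0 < c) :
    log (c • P).det = n * log c + log P.det := by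
  rw [det_smul, Fintype.card_fin, log_mul (by positivity) hP.ne', log_pow]

lemma gaussianPdf_eq_exp (μ : Fin n → ℝ) {P : Matrix (Fin n) (Fin n) ℝ} (hP : 0 < P.det)
    (x : Fin n → ℝ) :
    gaussianPdf μ P x = exp (-(n * log (2 * π) + log P.det + (x - μ) ⬝ᵥ P⁻¹ *ᵥ (x - μ)) / 2) := by
  rw [gaussianPdf, rpow_def_of_pos (by positivity), rpow_def_of_pos hP, ← exp_add, ← exp_add]
  congr 1
  ring

lemma epsConst_eq_exp {c : ℝ} (hc : 0 < c) {P : Matrix (Fin n) (Fin n) ℝ} (hP : 0 < P.det) :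
    epsConst c P = exp (((1 - c) * (n * log (2 * π) + log P.det) - n * log c) / 2) := by
  have h2π : 0 < 2 * π := by positivity
  have hdet₁ : 0 < ((2 * π * c⁻¹) • P).det := by rw [det_smul]; positivity
  have hdet₂ : 0 < ((2 * π) • P).det := by rw [det_smul]; positivity
  rw [epsConst, smul_smul, sqrt_eq_rpow, rpow_def_of_pos (by positivity),
    log_mul hdet₁.ne' (rpow_pos_of_pos hdet₂ _).ne', log_rpow hdet₂,
    log_det_smul hP (by positivity), log_det_smul hP h2π, log_mul h2π.ne' (inv_ne_zero hc.ne'),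
    log_inv]
  congr 1
  ring

lemma gaussianPdf_rpow (μ : Fin n → ℝ) {P : Matrix (Fin n) (Fin n) ℝ} (hP : P.PosDef) {c : ℝ}
    (hc : 0 < c) (x : Fin n → ℝ) :
    gaussianPdf μ P x ^ c = epsConst c P * gaussianPdf μ (c⁻¹ • P) x := by
  rw [gaussianPdf_eq_exp μ hP.det_pos, epsConst_eq_exp hc hP.det_pos,
    gaussianPdf_eq_exp μ (hP.smul (inv_pos.mpr hc)).det_pos, ← exp_mul, ← exp_add, exp_eq_exp,
    inv_inv_smul hP.det_pos.ne'.isUnit, log_det_smul hP.det_pos (inv_pos.mpr hc), log_inv, smul_mulVec, dotProduct_smul,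
    smul_eq_mul]
  ring

theorem gaussianPdf_mul_gaussianPdf (μ₁ μ₂ : Fin n → ℝ) {P₁ P₂ : Matrix (Fin n) (Fin n) ℝ}
    (hP₁ : P₁.PosDef) (hP₂ : P₂.PosDef) (x : Fin n → ℝ) :
    gaussianPdf μ₁ P₁ x * gaussianPdf μ₂ P₂ x =
      gaussianPdf 0 (P₁ + P₂) (μ₁ - μ₂) *
        gaussianPdf ((P₁⁻¹ + P₂⁻¹)⁻¹ *ᵥ (P₁⁻¹ *ᵥ μ₁ + P₂⁻¹ *ᵥ μ₂)) (P₁⁻¹ + P₂⁻¹)⁻¹ x := by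
  have hS : (P₁⁻¹ + P₂⁻¹).PosDef := hP₁.inv.add hP₂.inv
  have hq := quadForm_add_quadForm (isHermitian_iff_isSymm.mp hP₁.inv.1)
    (isHermitian_iff_isSymm.mp hP₂.inv.1) hS.det_pos.ne'.isUnit μ₁ μ₂ x
  rw [← inv_add_eq_inv_mul_inv_inv_add_inv_mul_inv hP₁.det_pos.ne'.isUnit
    hP₂.det_pos.ne'.isUnit] at hq
  have hdet : log (P₁ + P₂).det = log P₁.det + log (P₁⁻¹ + P₂⁻¹).det + log P₂.det := by
    rw [add_eq_mul_inv_add_inv_mul hP₁.det_pos.ne'.isUnit hP₂.det_pos.ne'.isUnit, det_mul,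
      det_mul, log_mul (by positivity [hP₁.det_pos, hS.det_pos]) hP₂.det_pos.ne',
      log_mul hP₁.det_pos.ne' hS.det_pos.ne']
  rw [gaussianPdf_eq_exp _ hP₁.det_pos, gaussianPdf_eq_exp _ hP₂.det_pos,
    gaussianPdf_eq_exp _ (hP₁.add hP₂).det_pos, gaussianPdf_eq_exp _ hS.inv.det_pos, ← exp_add,
    ← exp_add, exp_eq_exp, nonsing_inv_nonsing_inv _ hS.det_pos.ne'.isUnit, det_nonsing_inv,
    Ring.inverse_eq_inv', log_inv, hdet, sub_zero]
  linear_combination (-1 / 2 : ℝ) * hq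

end Gaussian

/-- The weighted geometric mean of two Gaussian densities is, up to an
explicit constant, again a Gaussian density (the single-component GCI fusion identity). -/
theorem gaussian_geometric_mean
    {n : ℕ} (μ₁ μ₂ : Fin n → ℝ) (P₁ P₂ : Matrix (Fin n) (Fin n) ℝ)
    (hP₁ : P₁.PosDef) (hP₂ : P₂.PosDef)
    (ω : ℝ) (hω : ω ∈ Set.Ioo (0 : ℝ) 1)
    (Pbar : Matrix (Fin n) (Fin n) ℝ)
    (hPbar : Pbar = (ω • P₁⁻¹ + (1 - ω) • P₂⁻¹)⁻¹)
    (μbar : Fin n → ℝ)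
    (hμbar : μbar = Pbar *ᵥ (ω • (P₁⁻¹ *ᵥ μ₁) + (1 - ω) • (P₂⁻¹ *ᵥ μ₂))) :
    Pbar.PosDef ∧
      ∀ x : Fin n → ℝ,
        gaussianPdf μ₁ P₁ x ^ ω * gaussianPdf μ₂ P₂ x ^ (1 - ω) =
          epsConst ω P₁ * epsConst (1 - ω) P₂ *
            gaussianPdf 0 (ω⁻¹ • P₁ + (1 - ω)⁻¹ • P₂) (μ₁ - μ₂) *
            gaussianPdf μbar Pbar x := by
  obtain ⟨hω₀, hω₁⟩ := hω
  have h1ω : 0 < 1 - ω := sub_pos.mpr hω₁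
  have hQ₁ : (ω⁻¹ • P₁).PosDef := hP₁.smul (inv_pos.mpr hω₀)
  have hQ₂ : ((1 - ω)⁻¹ • P₂).PosDef := hP₂.smul (inv_pos.mpr h1ω)
  have hQ₁inv := inv_inv_smul hP₁.det_pos.ne'.isUnit ω
  have hQ₂inv := inv_inv_smul hP₂.det_pos.ne'.isUnit (1 - ω)
  subst hPbar hμbar
  refine ⟨hQ₁inv ▸ hQ₂inv ▸ (hQ₁.inv.add hQ₂.inv).inv, fun x => ?_⟩
  rw [gaussianPdf_rpow μ₁ hP₁ hω₀, gaussianPdf_rpow μ₂ hP₂ h1ω, mul_mul_mul_comm,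
    gaussianPdf_mul_gaussianPdf μ₁ μ₂ hQ₁ hQ₂, hQ₁inv, hQ₂inv, smul_mulVec, smul_mulVec]
  ring
end

section
/- Let s'(x) := Σ_{j=1}^{J} α_j N(x; μ_j, P_j) be a Gaussian-mixture prior on ℝ^n with α_j ≥ 0, Σ_j α_j = 1, and P_j symmetric positive definite. Let H ∈ ℝ^{p×n}, R ∈ ℝ^{p×p} symmetric positive definite, p_D ∈ [0,1] a detection probability, Z ⊂ ℝ^p a finite set of measurements, and κ(z) > 0 a clutter intensity for each z ∈ Z. Define the detection-and-clutter likelihood ℓ(x) := (1 − p_D) + p_D Σ_{z∈Z} N(z; H x, R)/κ(z), and for each j set S_j := R + H P_j Hᵀ, K_j := P_j Hᵀ S_j^{−1}, μ_j(z) := μ_j + K_j(z − H μ_j), P'_j := (I − K_j H) P_j, and α_j(z) := α_j · N(z; H μ_j, S_j)/κ(z). Then for every x ∈ ℝ^n the unnormalized posterior is again a Gaussian mixture: s'(x)·ℓ(x) = (1 − p_D) Σ_{j=1}^{J} α_j N(x; μ_j, P_j) + p_D Σ_{z∈Z} Σ_{j=1}^{J} α_j(z) N(x; μ_j(z), P'_j).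 -/
open Matrix Real

/-!
By linearity it suffices to treat one prior component and one measurement. The product
`N(x; μ, P) N(z; H x, R)` is the joint density of `(x, z)`, and it factors as the marginal
`N(z; H μ, S)` times the conditional `N(x; μ + K (z - H μ), P')`. On the level of exponents this
is completing the square in `x`: the quadratic part is the information matrix
`P⁻¹ + Hᵀ R⁻¹ H`, which is `P'⁻¹` by the Woodbury identity. The normalising constants agree
because `det S * det P' = det R * det P`, by the matrix determinant lemma.
-/

section QuadraticForm

variable {α m : Type*} [CommRing α] [Fintype m]

lemma Matrix.IsSymm.dotProduct_mulVec_comm {A : Matrix m m α} (hA : A.IsSymm) (a b : m → α) :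
    a ⬝ᵥ (A *ᵥ b) = b ⬝ᵥ (A *ᵥ a) := by
  simpa only [hA.eq] using dotProduct_transpose_mulVec A a b

lemma Matrix.IsSymm.sub_dotProduct_mulVec_sub {A : Matrix m m α} (hA : A.IsSymm)
    (a b : m → α) :
    (a - b) ⬝ᵥ (A *ᵥ (a - b)) = a ⬝ᵥ (A *ᵥ a) - 2 * (a ⬝ᵥ (A *ᵥ b)) + b ⬝ᵥ (A *ᵥ b) := by
  simp only [mulVec_sub, sub_dotProduct, dotProduct_sub, hA.dotProduct_mulVec_comm b a]
  ring

end QuadraticForm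

namespace Kalman

variable {α m k : Type*} [CommRing α] [Fintype m] [Fintype k] [DecidableEq k]
  (P : Matrix m m α) (R : Matrix k k α) (H : Matrix k m α)

def innovationCov : Matrix k k α := R + H * P * Hᵀ

noncomputable def gain : Matrix m k α := P * Hᵀ * (innovationCov P R H)⁻¹

variable {P R H}

lemma inv_innovationCov_add_gain_transpose_mul (hP : P.IsSymm) (hR : R.IsSymm)
    (hRu : IsUnit R.det) (hS : IsUnit (innovationCov P R H).det) :
    (innovationCov P R H)⁻¹ + (gain P R H)ᵀ * Hᵀ * R⁻¹ = R⁻¹ := by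
  have hSt : (innovationCov P R H)⁻¹ᵀ = (innovationCov P R H)⁻¹ := by
    rw [transpose_nonsing_inv]
    simp only [innovationCov, transpose_add, transpose_mul, transpose_transpose, hP.eq, hR.eq,
      Matrix.mul_assoc]
  have hSR : innovationCov P R H * R⁻¹ = 1 + H * P * Hᵀ * R⁻¹ := by
    rw [innovationCov, Matrix.add_mul, mul_nonsing_inv _ hRu]
  calc (innovationCov P R H)⁻¹ + (gain P R H)ᵀ * Hᵀ * R⁻¹
        = (innovationCov P R H)⁻¹ * (innovationCov P R H * R⁻¹) := by
        rw [gain, transpose_mul, transpose_mul, hSt, hP.eq, transpose_transpose, hSR]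
        simp only [Matrix.mul_add, Matrix.mul_one, Matrix.mul_assoc]
    _ = R⁻¹ := nonsing_inv_mul_cancel_left _ _ hS

variable [DecidableEq m]

variable (P R H) in
noncomputable def posteriorCov : Matrix m m α := (1 - gain P R H * H) * P

variable (P R H) in
noncomputable def information : Matrix m m α := P⁻¹ + Hᵀ * R⁻¹ * H

lemma information_mul_gain (hP : IsUnit P.det) (hR : IsUnit R.det)
    (hS : IsUnit (innovationCov P R H).det) :
    information P R H * gain P R H = Hᵀ * R⁻¹ := by
  have hMPH : information P R H * (P * Hᵀ) = Hᵀ * R⁻¹ * innovationCov P R H := by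
    simp only [information, innovationCov, Matrix.add_mul, Matrix.mul_add, Matrix.mul_assoc,
      nonsing_inv_mul_cancel_left _ _ hP, nonsing_inv_mul _ hR, Matrix.mul_one]
  rw [gain, ← Matrix.mul_assoc, hMPH, Matrix.mul_assoc, mul_nonsing_inv _ hS, Matrix.mul_one]

lemma posteriorCov_eq_inv_information (hP : IsUnit P.det) (hR : IsUnit R.det)
    (hS : IsUnit (innovationCov P R H).det) :
    posteriorCov P R H = (information P R H)⁻¹ := by
  have hPi : IsUnit P⁻¹ := isUnit_nonsing_inv_iff.2 ((isUnit_iff_isUnit_det _).2 hP)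
  have hRi : IsUnit R⁻¹ := isUnit_nonsing_inv_iff.2 ((isUnit_iff_isUnit_det _).2 hR)
  have hS' : IsUnit (R⁻¹⁻¹ + H * P⁻¹⁻¹ * Hᵀ) := by
    rwa [nonsing_inv_nonsing_inv _ hP, nonsing_inv_nonsing_inv _ hR, isUnit_iff_isUnit_det]
  rw [information, add_mul_mul_inv_eq_sub _ _ _ _ hPi hRi hS', nonsing_inv_nonsing_inv _ hP,
    nonsing_inv_nonsing_inv _ hR, posteriorCov, gain, innovationCov]
  simp only [Matrix.sub_mul, Matrix.one_mul, Matrix.mul_assoc]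

lemma det_innovationCov (hP : IsUnit P.det) (hR : IsUnit R.det) :
    (innovationCov P R H).det = R.det * P.det * (information P R H).det := by
  have hPM : P * information P R H = 1 + P * Hᵀ * R⁻¹ * H := by
    rw [information, Matrix.mul_add, mul_nonsing_inv _ hP, Matrix.mul_assoc, Matrix.mul_assoc,
      Matrix.mul_assoc]
  rw [innovationCov, Matrix.mul_assoc H P, det_add_mul _ _ hR, ← hPM, det_mul, mul_assoc]

lemma isUnit_det_information (hP : IsUnit P.det) (hR : IsUnit R.det)
    (hS : IsUnit (innovationCov P R H).det) : IsUnit (information P R H).det :=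
  isUnit_of_mul_isUnit_right (det_innovationCov hP hR ▸ hS)

lemma inv_posteriorCov (hP : IsUnit P.det) (hR : IsUnit R.det)
    (hS : IsUnit (innovationCov P R H).det) :
    (posteriorCov P R H)⁻¹ = information P R H := by
  rw [posteriorCov_eq_inv_information hP hR hS,
    nonsing_inv_nonsing_inv _ (isUnit_det_information hP hR hS)]

lemma det_innovationCov_mul_det_posteriorCov (hP : IsUnit P.det) (hR : IsUnit R.det)
    (hS : IsUnit (innovationCov P R H).det) :
    (innovationCov P R H).det * (posteriorCov P R H).det = R.det * P.det := by
  rw [posteriorCov_eq_inv_information hP hR hS, det_nonsing_inv, det_innovationCov hP hR,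
    mul_assoc, Ring.mul_inverse_cancel _ (isUnit_det_information hP hR hS), mul_one]

lemma isSymm_information (hP : P.IsSymm) (hR : R.IsSymm) : (information P R H).IsSymm := by
  simp only [information, IsSymm, transpose_add, transpose_mul, transpose_transpose, hP.inv.eq,
    hR.inv.eq, Matrix.mul_assoc]

lemma quadratic_add_quadratic (hP : P.IsSymm) (hR : R.IsSymm) (hPu : IsUnit P.det)
    (hRu : IsUnit R.det) (hS : IsUnit (innovationCov P R H).det) (u : m → α) (w : k → α) :
    u ⬝ᵥ (P⁻¹ *ᵥ u) + (w - H *ᵥ u) ⬝ᵥ (R⁻¹ *ᵥ (w - H *ᵥ u)) =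
      w ⬝ᵥ ((innovationCov P R H)⁻¹ *ᵥ w) +
        (u - gain P R H *ᵥ w) ⬝ᵥ (information P R H *ᵥ (u - gain P R H *ᵥ w)) := by
  have hMu : u ⬝ᵥ (information P R H *ᵥ u) =
      u ⬝ᵥ (P⁻¹ *ᵥ u) + (H *ᵥ u) ⬝ᵥ (R⁻¹ *ᵥ (H *ᵥ u)) := by
    rw [information, add_mulVec, dotProduct_add, ← mulVec_mulVec, ← mulVec_mulVec,
      dotProduct_transpose_mulVec, dotProduct_comm (R⁻¹ *ᵥ _)]
  have hMK : u ⬝ᵥ (information P R H *ᵥ (gain P R H *ᵥ w)) = w ⬝ᵥ (R⁻¹ *ᵥ (H *ᵥ u)) := by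
    rw [mulVec_mulVec, information_mul_gain hPu hRu hS, ← mulVec_mulVec,
      dotProduct_transpose_mulVec, dotProduct_comm, hR.inv.dotProduct_mulVec_comm]
  have hKMK : (gain P R H *ᵥ w) ⬝ᵥ (information P R H *ᵥ (gain P R H *ᵥ w)) =
      w ⬝ᵥ (((gain P R H)ᵀ * Hᵀ * R⁻¹) *ᵥ w) := by
    rw [mulVec_mulVec, information_mul_gain hPu hRu hS, dotProduct_comm,
      ← dotProduct_transpose_mulVec, mulVec_mulVec, Matrix.mul_assoc]
  have hRw : w ⬝ᵥ ((innovationCov P R H)⁻¹ *ᵥ w) + w ⬝ᵥ (((gain P R H)ᵀ * Hᵀ * R⁻¹) *ᵥ w) =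
      w ⬝ᵥ (R⁻¹ *ᵥ w) := by
    rw [← dotProduct_add, ← add_mulVec, inv_innovationCov_add_gain_transpose_mul hP hR hRu hS]
  rw [hR.inv.sub_dotProduct_mulVec_sub, (isSymm_information hP hR).sub_dotProduct_mulVec_sub]
  linear_combination -hRw - hMu + 2 * hMK - hKMK

end Kalman

open Kalman

lemma posDef_innovationCov {m k : Type*} [Fintype m] [Fintype k]
    {P : Matrix m m ℝ} {R : Matrix k k ℝ} (hP : P.PosSemidef) (hR : R.PosDef)
    (H : Matrix k m ℝ) : (innovationCov P R H).PosDef :=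
  hR.add_posSemidef (by simpa using hP.mul_mul_conjTranspose_same H)

lemma gaussianPdf_mul_gaussianPdf_s14 {n p : ℕ} (μ x : Fin n → ℝ) (P : Matrix (Fin n) (Fin n) ℝ)
    (ν y : Fin p → ℝ) (Q : Matrix (Fin p) (Fin p) ℝ) (hP : 0 ≤ P.det) (hQ : 0 ≤ Q.det) :
    gaussianPdf μ P x * gaussianPdf ν Q y =
      (2 * π) ^ (-(n : ℝ) / 2) * (2 * π) ^ (-(p : ℝ) / 2) * (P.det * Q.det) ^ (-(1 : ℝ) / 2) *
        exp (-(1 / 2) * ((x - μ) ⬝ᵥ (P⁻¹ *ᵥ (x - μ)) + (y - ν) ⬝ᵥ (Q⁻¹ *ᵥ (y - ν)))) := by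
  rw [gaussianPdf, gaussianPdf, mul_rpow hP hQ, mul_add, exp_add]
  ring

theorem gaussianPdf_mul_gaussianPdf_mulVec {n p : ℕ} {P : Matrix (Fin n) (Fin n) ℝ}
    {R : Matrix (Fin p) (Fin p) ℝ} (hP : P.PosDef) (hR : R.PosDef) (H : Matrix (Fin p) (Fin n) ℝ)
    (μ x : Fin n → ℝ) (z : Fin p → ℝ) :
    gaussianPdf μ P x * gaussianPdf (H *ᵥ x) R z =
      gaussianPdf (H *ᵥ μ) (innovationCov P R H) z *
        gaussianPdf (μ + gain P R H *ᵥ (z - H *ᵥ μ)) (posteriorCov P R H) x := by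
  have hS := posDef_innovationCov hP.posSemidef hR H
  have hPu : IsUnit P.det := hP.det_pos.ne'.isUnit
  have hRu : IsUnit R.det := hR.det_pos.ne'.isUnit
  have hSu : IsUnit (innovationCov P R H).det := hS.det_pos.ne'.isUnit
  have hdet := det_innovationCov_mul_det_posteriorCov hPu hRu hSu
  have hP' : 0 < (posteriorCov P R H).det :=
    pos_of_mul_pos_right (hdet ▸ mul_pos hR.det_pos hP.det_pos) hS.det_pos.le
  have hexp : (x - μ) ⬝ᵥ (P⁻¹ *ᵥ (x - μ)) + (z - H *ᵥ x) ⬝ᵥ (R⁻¹ *ᵥ (z - H *ᵥ x)) =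
      (x - (μ + gain P R H *ᵥ (z - H *ᵥ μ))) ⬝ᵥ
          ((posteriorCov P R H)⁻¹ *ᵥ (x - (μ + gain P R H *ᵥ (z - H *ᵥ μ)))) +
        (z - H *ᵥ μ) ⬝ᵥ ((innovationCov P R H)⁻¹ *ᵥ (z - H *ᵥ μ)) := by
    have hz : z - H *ᵥ x = (z - H *ᵥ μ) - H *ᵥ (x - μ) := by rw [mulVec_sub]; abel
    have hx : x - (μ + gain P R H *ᵥ (z - H *ᵥ μ)) = (x - μ) - gain P R H *ᵥ (z - H *ᵥ μ) := by
      abel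
    rw [hz, hx, inv_posteriorCov hPu hRu hSu,
      quadratic_add_quadratic (isHermitian_iff_isSymm.1 hP.isHermitian)
        (isHermitian_iff_isSymm.1 hR.isHermitian) hPu hRu hSu, add_comm]
  rw [mul_comm (gaussianPdf (H *ᵥ μ) _ z),
    gaussianPdf_mul_gaussianPdf_s14 _ _ _ _ _ _ hP.det_pos.le hR.det_pos.le,
    gaussianPdf_mul_gaussianPdf_s14 _ _ _ _ _ _ hP'.le hS.det_pos.le, hexp,
    mul_comm (posteriorCov P R H).det, hdet, mul_comm R.det]

theorem gm_bernoulli_update_general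
    {n p : ℕ} {J : ℕ}
    -- Gaussian-mixture prior
    (α : Fin J → ℝ)
    (μs : Fin J → Fin n → ℝ)
    (Ps : Fin J → Matrix (Fin n) (Fin n) ℝ) (hPs : ∀ j, (Ps j).PosDef)
    (s' : (Fin n → ℝ) → ℝ)
    (hs' : ∀ x, s' x = ∑ j, α j * gaussianPdf (μs j) (Ps j) x)
    -- linear-Gaussian measurement model, detection probability and clutter
    (H : Matrix (Fin p) (Fin n) ℝ)
    (R : Matrix (Fin p) (Fin p) ℝ) (hR : R.PosDef)
    (pD : ℝ)
    (Z : Finset (Fin p → ℝ))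
    (κ : (Fin p → ℝ) → ℝ)
    -- detection-and-clutter likelihood
    (ℓ : (Fin n → ℝ) → ℝ)
    (hℓ : ∀ x, ℓ x = (1 - pD) + pD * ∑ z ∈ Z, gaussianPdf (H *ᵥ x) R z / κ z)
    -- Kalman quantities
    (S : Fin J → Matrix (Fin p) (Fin p) ℝ) (hS : ∀ j, S j = R + H * Ps j * Hᵀ)
    (K : Fin J → Matrix (Fin n) (Fin p) ℝ) (hK : ∀ j, K j = Ps j * Hᵀ * (S j)⁻¹)
    (μz : Fin J → (Fin p → ℝ) → Fin n → ℝ)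
    (hμz : ∀ j z, μz j z = μs j + K j *ᵥ (z - H *ᵥ μs j))
    (Ps' : Fin J → Matrix (Fin n) (Fin n) ℝ)
    (hPs' : ∀ j, Ps' j = (1 - K j * H) * Ps j)
    (αz : Fin J → (Fin p → ℝ) → ℝ)
    (hαz : ∀ j z, αz j z = α j * gaussianPdf (H *ᵥ μs j) (S j) z / κ z) :
    ∀ x : Fin n → ℝ,
      s' x * ℓ x =
        (1 - pD) * ∑ j, α j * gaussianPdf (μs j) (Ps j) x
          + pD * ∑ z ∈ Z, ∑ j, αz j z * gaussianPdf (μz j z) (Ps' j) x := by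
  intro x
  have hcomponent : ∀ j z, α j * gaussianPdf (μs j) (Ps j) x * (gaussianPdf (H *ᵥ x) R z / κ z)
      = αz j z * gaussianPdf (μz j z) (Ps' j) x := by
    intro j z
    have hSj : S j = innovationCov (Ps j) R H := hS j
    have hKj : K j = gain (Ps j) R H := by rw [hK, hSj]; rfl
    have hPs'j : Ps' j = posteriorCov (Ps j) R H := by rw [hPs', hKj]; rfl
    rw [hαz, hμz, hPs'j, hKj, hSj, mul_div_assoc', mul_assoc,
      gaussianPdf_mul_gaussianPdf_mulVec (hPs j) hR]
    ring
  rw [hs', hℓ, mul_add, mul_comm _ (1 - pD), mul_left_comm, Finset.sum_mul_sum, Finset.sum_comm]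
  simp only [hcomponent]

/-- Multiplying a Gaussian-mixture prior by the Bernoulli-filter
detection-and-clutter likelihood yields again a Gaussian mixture, with Kalman-updated
components. -/
theorem gm_bernoulli_update
    {n p : ℕ} {J : ℕ}
    -- Gaussian-mixture prior
    (α : Fin J → ℝ) (hα0 : ∀ j, 0 ≤ α j) (hα1 : ∑ j, α j = 1)
    (μs : Fin J → Fin n → ℝ)
    (Ps : Fin J → Matrix (Fin n) (Fin n) ℝ) (hPs : ∀ j, (Ps j).PosDef)
    (s' : (Fin n → ℝ) → ℝ)
    (hs' : ∀ x, s' x = ∑ j, α j * gaussianPdf (μs j) (Ps j) x)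
    -- linear-Gaussian measurement model, detection probability and clutter
    (H : Matrix (Fin p) (Fin n) ℝ)
    (R : Matrix (Fin p) (Fin p) ℝ) (hR : R.PosDef)
    (pD : ℝ) (hpD : pD ∈ Set.Icc (0 : ℝ) 1)
    (Z : Finset (Fin p → ℝ))
    (κ : (Fin p → ℝ) → ℝ) (hκ : ∀ z ∈ Z, 0 < κ z)
    -- detection-and-clutter likelihood
    (ℓ : (Fin n → ℝ) → ℝ)
    (hℓ : ∀ x, ℓ x = (1 - pD) + pD * ∑ z ∈ Z, gaussianPdf (H *ᵥ x) R z / κ z)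
    -- Kalman quantities
    (S : Fin J → Matrix (Fin p) (Fin p) ℝ) (hS : ∀ j, S j = R + H * Ps j * Hᵀ)
    (K : Fin J → Matrix (Fin n) (Fin p) ℝ) (hK : ∀ j, K j = Ps j * Hᵀ * (S j)⁻¹)
    (μz : Fin J → (Fin p → ℝ) → Fin n → ℝ)
    (hμz : ∀ j z, μz j z = μs j + K j *ᵥ (z - H *ᵥ μs j))
    (Ps' : Fin J → Matrix (Fin n) (Fin n) ℝ)
    (hPs' : ∀ j, Ps' j = (1 - K j * H) * Ps j)
    (αz : Fin J → (Fin p → ℝ) → ℝ)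
    (hαz : ∀ j z, αz j z = α j * gaussianPdf (H *ᵥ μs j) (S j) z / κ z) :
    ∀ x : Fin n → ℝ,
      s' x * ℓ x =
        (1 - pD) * ∑ j, α j * gaussianPdf (μs j) (Ps j) x
          + pD * ∑ z ∈ Z, ∑ j, αz j z * gaussianPdf (μz j z) (Ps' j) x :=
  gm_bernoulli_update_general α μs Ps hPs s' hs' H R hR pD Z κ ℓ hℓ S hS K hK μz hμz Ps' hPs' αz hαz
end
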